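/- Lamination inclusion: Let 𝔄₁ = {O, A₁¹, A₁²} with A₁¹ = diag(−1/2,1), A₁² = diag(−2,2), 𝔄₂ = {O, A₂¹, A₂²} with A₂¹ = diag(5/2,1), A₂² = diag(3,2) (O = diag(0,0)), P₁ = [0,1/2)×[0,1), P₂ = [1/2,1)×[0,1), and let 𝔅 = {O, B¹, B²} where B^j = (A₁^j + A₂^j)/2, i.e., B¹ = diag(1,1) and B² = diag(1/2,2). Then 𝔅 ⊆ 𝔄_hom, the homogenized set related to {(𝔄₁,P₁),(𝔄₂,P₂)}. In particular, for each j ∈ {1,2} and every sequence ε_h → 0⁺ there exist Lipschitz maps u_h : Ω → ℝ² with uniformly bounded Lipschitz constants converging uniformly to x ↦ B^j x and with Du_h(x) = χ_{P₁}(⟨x/ε_h⟩) A₁^j + χ_{P₂}(⟨x/ε_h⟩) A₂^j for a.e. x ∈ Ω. -/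

import Mathlib

open MeasureTheory Filter Topology Metric Set Matrix
open scoped ENNReal

noncomputable section

-- `M^{2×2}` is endowed with the Frobenius norm.
attribute [local instance] Matrix.frobeniusNormedAddCommGroup Matrix.frobeniusNormedSpace

/-- The componentwise fractional part `⟨x⟩ ∈ [0,1)²` of `x ∈ ℝ²`. -/
def fracPart (x : Fin 2 → ℝ) : Fin 2 → ℝ := fun i => Int.fract (x i)

/-- `P₁ = [0,1/2) × [0,1)`. -/
def cellP₁ : Set (Fin 2 → ℝ) := {y | y 0 ∈ Set.Ico (0 : ℝ) (1/2) ∧ y 1 ∈ Set.Ico (0 : ℝ) 1}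

/-- `P₂ = [1/2,1) × [0,1)`. -/
def cellP₂ : Set (Fin 2 → ℝ) := {y | y 0 ∈ Set.Ico (1/2 : ℝ) 1 ∧ y 1 ∈ Set.Ico (0 : ℝ) 1}

/-- `𝒟(y, Λ) = χ_{P₁}(y) dist(Λ, 𝔄₁) + χ_{P₂}(y) dist(Λ, 𝔄₂)`. -/
def distMix (𝔄₁ 𝔄₂ : Set (Matrix (Fin 2) (Fin 2) ℝ)) (y : Fin 2 → ℝ)
    (Λ : Matrix (Fin 2) (Fin 2) ℝ) : ℝ :=
  cellP₁.indicator (fun _ => Metric.infDist Λ 𝔄₁) y +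
    cellP₂.indicator (fun _ => Metric.infDist Λ 𝔄₂) y

/-- The homogenized set related to `{(𝔄₁,P₁),(𝔄₂,P₂)}`: all `A ∈ M^{2×2}` such that for
every sequence `ε_h → 0⁺` there exist Lipschitz maps `u_h : Ω → ℝ²` with uniformly bounded
Lipschitz constants, converging uniformly on `Ω` to `x ↦ Ax` (i.e. `u_h ⇀ Ax` weakly* in
`W^{1,∞}(Ω,ℝ²)`), whose a.e. derivatives `Du_h` satisfy
`χ_{P₁}(⟨x/ε_h⟩) dist(Du_h(x), 𝔄₁) + χ_{P₂}(⟨x/ε_h⟩) dist(Du_h(x), 𝔄₂) → 0`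
in Lebesgue measure on `Ω`. -/
def homSet (Ω : Set (Fin 2 → ℝ)) (𝔄₁ 𝔄₂ : Set (Matrix (Fin 2) (Fin 2) ℝ)) :
    Set (Matrix (Fin 2) (Fin 2) ℝ) :=
  {A | ∀ ε : ℕ → ℝ, (∀ h, 0 < ε h) → Tendsto ε atTop (𝓝 0) →
    ∃ (u : ℕ → (Fin 2 → ℝ) → Fin 2 → ℝ)
      (Du : ℕ → (Fin 2 → ℝ) → Matrix (Fin 2) (Fin 2) ℝ) (L : NNReal),
      (∀ h, LipschitzOnWith L (u h) Ω) ∧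
      TendstoUniformlyOn u (fun x => A.mulVec x) atTop Ω ∧
      (∀ h, ∀ᵐ x ∂volume.restrict Ω,
        HasFDerivAt (u h) (Du h x).mulVecLin.toContinuousLinearMap x) ∧
      TendstoInMeasure (volume.restrict Ω)
        (fun h x => distMix 𝔄₁ 𝔄₂ (fracPart ((ε h)⁻¹ • x)) (Du h x)) atTop 0}

/-- `𝔄₁ = {O, diag(−1/2, 1), diag(−2, 2)}`. -/
def setA₁ : Set (Matrix (Fin 2) (Fin 2) ℝ) :=
  {0, Matrix.diagonal ![-(1 : ℝ)/2, 1], Matrix.diagonal ![(-2 : ℝ), 2]}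

/-- `𝔄₂ = {O, diag(5/2, 1), diag(3, 2)}`. -/
def setA₂ : Set (Matrix (Fin 2) (Fin 2) ℝ) :=
  {0, Matrix.diagonal ![(5 : ℝ)/2, 1], Matrix.diagonal ![(3 : ℝ), 2]}

/-- `𝔅 = {O, diag(1, 1), diag(1/2, 2)}`. -/
def setB : Set (Matrix (Fin 2) (Fin 2) ℝ) :=
  {0, Matrix.diagonal ![(1 : ℝ), 1], Matrix.diagonal ![(1 : ℝ)/2, 2]}

/-- `A₁¹ = diag(−1/2,1)`, `A₁² = diag(−2,2)` (indexed by `Fin 2`). -/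
def lamA₁ : Fin 2 → Matrix (Fin 2) (Fin 2) ℝ :=
  ![Matrix.diagonal ![-(1 : ℝ)/2, 1], Matrix.diagonal ![(-2 : ℝ), 2]]

/-- `A₂¹ = diag(5/2,1)`, `A₂² = diag(3,2)` (indexed by `Fin 2`). -/
def lamA₂ : Fin 2 → Matrix (Fin 2) (Fin 2) ℝ :=
  ![Matrix.diagonal ![(5 : ℝ)/2, 1], Matrix.diagonal ![(3 : ℝ), 2]]

/-- `B^j = (A₁^j + A₂^j)/2`, so that `B¹ = diag(1,1)` and `B² = diag(1/2,2)`. -/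
def lamB (j : Fin 2) : Matrix (Fin 2) (Fin 2) ℝ := ((1 : ℝ)/2) • (lamA₁ j + lamA₂ j)

/-! ### Auxiliary material for the proof -/

/-- The set of integers inside `ℝ`. -/
def zS : Set ℝ := Set.range ((↑) : ℤ → ℝ)

/-- Distance to the nearest integer. -/
def qd (t : ℝ) : ℝ := Metric.infDist t zS

/-- The first standard basis vector of `ℝ²`. -/
def eov : Fin 2 → ℝ := ![1, 0]

lemma zS_ne : zS.Nonempty := ⟨0, 0, by norm_num⟩

lemma qd_lip : LipschitzWith 1 qd := lipschitz_infDist_pt zS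

lemma le_qd {d t : ℝ} (h : ∀ m : ℤ, d ≤ |t - m|) : d ≤ qd t := by
  refine le_of_not_gt fun hlt => ?_
  obtain ⟨y, ⟨m, rfl⟩, hy⟩ := (infDist_lt_iff zS_ne).1 hlt
  rw [Real.dist_eq] at hy
  exact absurd (h m) (not_le.2 hy)

lemma qd_nonneg (t : ℝ) : 0 ≤ qd t := infDist_nonneg

lemma qd_le_one (t : ℝ) : qd t ≤ 1 := by
  have h := infDist_le_dist_of_mem (x := t) (s := zS) ⟨⌊t⌋, rfl⟩
  rw [Real.dist_eq] at h
  have h2 : |t - (⌊t⌋ : ℝ)| ≤ 1 := by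
    rw [abs_of_nonneg (by linarith [Int.floor_le t])]
    linarith [Int.lt_floor_add_one t]
  exact h.trans h2

lemma qd_eq_left {n : ℤ} {t : ℝ} (h1 : (n : ℝ) ≤ t) (h2 : t ≤ n + 1/2) : qd t = t - n := by
  refine le_antisymm ?_ (le_qd fun m => ?_)
  · have := infDist_le_dist_of_mem (x := t) (s := zS) ⟨n, rfl⟩
    rwa [Real.dist_eq, abs_of_nonneg (by linarith)] at this
  · rcases le_or_gt m n with hm | hm
    · have : (m : ℝ) ≤ n := by exact_mod_cast hm
      calc t - n ≤ t - m := by linarith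
        _ ≤ |t - m| := le_abs_self _
    · have : (n : ℝ) + 1 ≤ m := by exact_mod_cast hm
      calc t - n ≤ (m : ℝ) - t := by linarith
        _ ≤ |t - m| := by rw [abs_sub_comm]; exact le_abs_self _

lemma qd_eq_right {n : ℤ} {t : ℝ} (h1 : (n : ℝ) + 1/2 ≤ t) (h2 : t ≤ n + 1) :
    qd t = n + 1 - t := by
  refine le_antisymm ?_ (le_qd fun m => ?_)
  · have := infDist_le_dist_of_mem (x := t) (s := zS) ⟨n + 1, rfl⟩
    rw [Real.dist_eq, abs_sub_comm, abs_of_nonneg (by push_cast; linarith)] at this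
    push_cast at this ⊢; exact this
  · rcases le_or_gt m n with hm | hm
    · have : (m : ℝ) ≤ n := by exact_mod_cast hm
      calc (n : ℝ) + 1 - t ≤ t - m := by linarith
        _ ≤ |t - m| := le_abs_self _
    · have : (n : ℝ) + 1 ≤ m := by exact_mod_cast hm
      calc (n : ℝ) + 1 - t ≤ (m : ℝ) - t := by linarith
        _ ≤ |t - m| := by rw [abs_sub_comm]; exact le_abs_self _

lemma norm_eov_le : ‖eov‖ ≤ 1 := by
  rw [pi_norm_le_iff_of_nonneg (by norm_num)]
  intro i; fin_cases i <;> simp [eov]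

lemma bad_null (e : ℝ) :
    volume {x : Fin 2 → ℝ | ∃ n : ℤ, x 0 = e * n / 2} = 0 := by
  have hS : volume {t : ℝ | ∃ n : ℤ, t = e * n / 2} = 0 := by
    have : {t : ℝ | ∃ n : ℤ, t = e * n / 2} = Set.range (fun n : ℤ => e * n / 2) := by
      ext t; simp [eq_comm]
    rw [this]
    exact Set.Countable.measure_zero (Set.countable_range _) _
  have hset : {x : Fin 2 → ℝ | ∃ n : ℤ, x 0 = e * n / 2} =
      Set.pi Set.univ
        (fun i => if i = 0 then {t : ℝ | ∃ n : ℤ, t = e * n / 2} else Set.univ) := by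
    ext x
    simp only [Set.mem_pi, Set.mem_univ, forall_true_left, Set.mem_setOf_eq]
    constructor
    · intro h i
      fin_cases i <;> simp [h]
    · intro h
      have := h 0
      simpa using this
  rw [hset, volume_pi_pi, Fin.prod_univ_two]
  simp [hS]

/-- The pointwise derivative identity away from the bad set. -/
lemma deriv_pointwise (e c : ℝ) (he : 0 < e)
    (B A₁ A₂ : Matrix (Fin 2) (Fin 2) ℝ)
    (h1 : ∀ v : Fin 2 → ℝ, A₁.mulVec v = B.mulVec v - (c * v 0) • eov)
    (h2 : ∀ v : Fin 2 → ℝ, A₂.mulVec v = B.mulVec v + (c * v 0) • eov)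
    (x : Fin 2 → ℝ) (hx : ¬ ∃ n : ℤ, x 0 = e * n / 2) :
    HasFDerivAt (fun y : Fin 2 → ℝ => B.mulVec y + (-(e * c * qd (y 0 / e))) • eov)
      ((cellP₁.indicator (fun _ => A₁) (fracPart (e⁻¹ • x)) +
        cellP₂.indicator (fun _ => A₂)
          (fracPart (e⁻¹ • x))).mulVecLin.toContinuousLinearMap) x := by
  set t : ℝ := x 0 / e with ht
  set n : ℤ := ⌊t⌋ with hn
  have hxt : x 0 = t * e := by rw [ht, div_mul_cancel₀ _ he.ne']
  have hfr0 : Int.fract t ≠ 0 := by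
    intro h
    have : t = n := by
      have := Int.self_sub_floor t
      rw [h] at this; linarith [this.symm]
    exact hx ⟨2 * n, by rw [hxt, this]; push_cast; ring⟩
  have hfr2 : Int.fract t ≠ 1/2 := by
    intro h
    have : t = n + 1/2 := by
      have := Int.self_sub_floor t
      rw [h] at this; linarith
    exact hx ⟨2 * n + 1, by rw [hxt, this]; push_cast; ring⟩
  have hfl : (n : ℝ) ≤ t := Int.floor_le t
  have hfu : t < n + 1 := Int.lt_floor_add_one t
  have hfract : Int.fract t = t - n := (Int.self_sub_floor t).symm
  have hy0 : (e⁻¹ • x) 0 = t := by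
    simp [ht, Pi.smul_apply, smul_eq_mul]; ring
  have hfrlt1 : Int.fract t < 1 := Int.fract_lt_one t
  have hfrnn : 0 ≤ Int.fract t := Int.fract_nonneg t
  have hfp1 : fracPart (e⁻¹ • x) 1 ∈ Set.Ico (0:ℝ) 1 :=
    ⟨Int.fract_nonneg _, Int.fract_lt_one _⟩
  have hfp0 : fracPart (e⁻¹ • x) 0 = Int.fract t := by
    simp [fracPart, hy0]
  rcases lt_or_gt_of_ne hfr2 with hlt | hgt
  · -- `fract t < 1/2`, gradient `A₁`
    have h0lt : 0 < Int.fract t := lt_of_le_of_ne hfrnn (Ne.symm hfr0)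
    have hmem : fracPart (e⁻¹ • x) ∈ cellP₁ := ⟨by rw [hfp0]; exact ⟨hfrnn, hlt⟩, hfp1⟩
    have hnmem : fracPart (e⁻¹ • x) ∉ cellP₂ := by
      intro hm
      have := hm.1.1
      rw [hfp0] at this; linarith
    rw [Set.indicator_of_mem hmem, Set.indicator_of_notMem hnmem, add_zero]
    have haff : HasFDerivAt (fun y : Fin 2 → ℝ => A₁.mulVec y + (e * c * n) • eov)
        A₁.mulVecLin.toContinuousLinearMap x := by
      have := (A₁.mulVecLin.toContinuousLinearMap.hasFDerivAt (x := x)).add_const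
        ((e * c * n) • eov)
      simpa using this
    refine haff.congr_of_eventuallyEq ?_
    have hU : IsOpen ((fun y : Fin 2 → ℝ => y 0) ⁻¹'
        Set.Ioo ((n : ℝ) * e) (((n : ℝ) + 1/2) * e)) :=
      isOpen_Ioo.preimage (continuous_apply 0)
    have hxU : x ∈ (fun y : Fin 2 → ℝ => y 0) ⁻¹'
        Set.Ioo ((n : ℝ) * e) (((n : ℝ) + 1/2) * e) := by
      simp only [Set.mem_preimage, Set.mem_Ioo]
      constructor
      · rw [hxt]; have : (n : ℝ) < t := by linarith [hfract ▸ h0lt]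
        nlinarith
      · rw [hxt]; have : t < (n : ℝ) + 1/2 := by linarith [hfract ▸ hlt]
        nlinarith
    filter_upwards [hU.mem_nhds hxU] with y hy
    obtain ⟨hy1, hy2⟩ := hy
    have hq : qd (y 0 / e) = y 0 / e - n := by
      apply qd_eq_left
      · rw [le_div_iff₀ he]; linarith
      · rw [div_le_iff₀ he]; linarith
    rw [hq, h1 y]
    have hsc : -(e * c * (y 0 / e - n)) = -(c * y 0) + e * c * n := by field_simp; ring
    rw [hsc, add_smul, neg_smul]
    abel
  · -- `fract t > 1/2`, gradient `A₂`
    have hmem : fracPart (e⁻¹ • x) ∈ cellP₂ := ⟨by rw [hfp0]; exact ⟨hgt.le, hfrlt1⟩, hfp1⟩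
    have hnmem : fracPart (e⁻¹ • x) ∉ cellP₁ := by
      intro hm
      have := hm.1.2
      rw [hfp0] at this; linarith
    rw [Set.indicator_of_mem hmem, Set.indicator_of_notMem hnmem, zero_add]
    have haff : HasFDerivAt
        (fun y : Fin 2 → ℝ => A₂.mulVec y + (-(e * c * ((n : ℝ) + 1))) • eov)
        A₂.mulVecLin.toContinuousLinearMap x := by
      have := (A₂.mulVecLin.toContinuousLinearMap.hasFDerivAt (x := x)).add_const
        ((-(e * c * ((n : ℝ) + 1))) • eov)
      simpa using this
    refine haff.congr_of_eventuallyEq ?_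
    have hU : IsOpen ((fun y : Fin 2 → ℝ => y 0) ⁻¹'
        Set.Ioo (((n : ℝ) + 1/2) * e) (((n : ℝ) + 1) * e)) :=
      isOpen_Ioo.preimage (continuous_apply 0)
    have hxU : x ∈ (fun y : Fin 2 → ℝ => y 0) ⁻¹'
        Set.Ioo (((n : ℝ) + 1/2) * e) (((n : ℝ) + 1) * e) := by
      simp only [Set.mem_preimage, Set.mem_Ioo]
      constructor
      · rw [hxt]; have : (n : ℝ) + 1/2 < t := by linarith [hfract ▸ hgt]
        nlinarith
      · rw [hxt]; have : t < (n : ℝ) + 1 := hfu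
        nlinarith
    filter_upwards [hU.mem_nhds hxU] with y hy
    obtain ⟨hy1, hy2⟩ := hy
    have hq : qd (y 0 / e) = (n : ℝ) + 1 - y 0 / e := by
      apply qd_eq_right
      · rw [le_div_iff₀ he]; linarith
      · rw [div_le_iff₀ he]; linarith
    rw [hq, h2 y]
    have hsc : -(e * c * ((n : ℝ) + 1 - y 0 / e)) = c * y 0 + -(e * c * ((n : ℝ) + 1)) := by
      field_simp; ring
    rw [hsc, add_smul]
    abel

/-- The master construction: the simple laminate. -/
lemma master (B A₁ A₂ : Matrix (Fin 2) (Fin 2) ℝ) (c : ℝ) (hc : 0 < c)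
    (h1 : ∀ v : Fin 2 → ℝ, A₁.mulVec v = B.mulVec v - (c * v 0) • eov)
    (h2 : ∀ v : Fin 2 → ℝ, A₂.mulVec v = B.mulVec v + (c * v 0) • eov)
    (Ω : Set (Fin 2 → ℝ)) (ε : ℕ → ℝ) (hε : ∀ h, 0 < ε h)
    (hε0 : Tendsto ε atTop (𝓝 0)) :
    ∃ (u : ℕ → (Fin 2 → ℝ) → Fin 2 → ℝ) (L : NNReal),
      (∀ h, LipschitzOnWith L (u h) Ω) ∧
      TendstoUniformlyOn u (fun x => B.mulVec x) atTop Ω ∧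
      (∀ h, ∀ᵐ x ∂volume.restrict Ω,
        HasFDerivAt (u h)
          ((cellP₁.indicator (fun _ => A₁) (fracPart ((ε h)⁻¹ • x)) +
            cellP₂.indicator (fun _ => A₂)
              (fracPart ((ε h)⁻¹ • x))).mulVecLin.toContinuousLinearMap) x) := by
  refine ⟨fun h x => B.mulVec x + (-(ε h * c * qd (x 0 / ε h))) • eov,
    ‖B.mulVecLin.toContinuousLinearMap‖₊ + c.toNNReal, fun h => ?_, ?_, fun h => ?_⟩
  · -- Lipschitz
    set e := ε h with he'
    have he : 0 < e := hε h
    have hB : LipschitzWith ‖B.mulVecLin.toContinuousLinearMap‖₊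
        (fun x : Fin 2 → ℝ => B.mulVec x) := by
      have := B.mulVecLin.toContinuousLinearMap.lipschitz
      exact this
    have hcorr : LipschitzWith c.toNNReal
        (fun x : Fin 2 → ℝ => (-(e * c * qd (x 0 / e))) • eov) := by
      refine LipschitzWith.of_dist_le_mul fun x y => ?_
      rw [dist_eq_norm, ← sub_smul]
      set r := -(e * c * qd (x 0 / e)) - -(e * c * qd (y 0 / e)) with hr
      have hr1 : ‖r • eov‖ ≤ |r| := by
        rw [norm_smul, Real.norm_eq_abs]
        nlinarith [norm_eov_le, abs_nonneg r, norm_nonneg eov]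
      have hr2 : |r| = e * c * |qd (x 0 / e) - qd (y 0 / e)| := by
        rw [show r = e * c * (qd (y 0/e) - qd (x 0/e)) by rw [hr]; ring,
          abs_mul, abs_of_pos (by positivity), abs_sub_comm]
      have hr3 : |qd (x 0 / e) - qd (y 0 / e)| ≤ |x 0 - y 0| / e := by
        have h := qd_lip.dist_le_mul (x 0 / e) (y 0 / e)
        rw [Real.dist_eq, Real.dist_eq, NNReal.coe_one, one_mul, div_sub_div_same, abs_div,
          abs_of_pos he] at h
        exact h
      have hr5 : |x 0 - y 0| ≤ dist x y := by
        have := dist_le_pi_dist x y 0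
        simpa [Real.dist_eq] using this
      have hcc : (c.toNNReal : ℝ) = c := Real.coe_toNNReal _ hc.le
      rw [hcc]
      have hr6 : e * c * (|x 0 - y 0| / e) = c * |x 0 - y 0| := by field_simp
      calc ‖r • eov‖ ≤ |r| := hr1
        _ = e * c * |qd (x 0 / e) - qd (y 0 / e)| := hr2
        _ ≤ e * c * (|x 0 - y 0| / e) := mul_le_mul_of_nonneg_left hr3 (by positivity)
        _ = c * |x 0 - y 0| := hr6
        _ ≤ c * dist x y := mul_le_mul_of_nonneg_left hr5 hc.le
    exact (hB.add hcorr).lipschitzOnWith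
  · -- uniform convergence
    rw [Metric.tendstoUniformlyOn_iff]
    intro η hη
    have hev : ∀ᶠ h in atTop, ε h < η / c := hε0.eventually_lt_const (by positivity)
    filter_upwards [hev] with h hh x _
    have he : 0 < ε h := hε h
    have hq0 := qd_nonneg (x 0 / ε h)
    have hq1 := qd_le_one (x 0 / ε h)
    have hdist : dist (B.mulVec x) (B.mulVec x + (-(ε h * c * qd (x 0 / ε h))) • eov)
        = ‖(-(ε h * c * qd (x 0 / ε h))) • eov‖ := by
      rw [dist_eq_norm, sub_add_cancel_left, norm_neg]
    rw [hdist, norm_smul, Real.norm_eq_abs]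
    have habs : |(-(ε h * c * qd (x 0 / ε h)))| = ε h * c * qd (x 0 / ε h) := by
      rw [abs_neg, abs_of_nonneg (by positivity)]
    rw [habs]
    have hqe : qd (x 0 / ε h) * ‖eov‖ ≤ 1 := by
      nlinarith [mul_le_mul hq1 norm_eov_le (norm_nonneg eov) zero_le_one]
    have hb1 : ε h * c * qd (x 0 / ε h) * ‖eov‖ ≤ ε h * c :=
      calc ε h * c * qd (x 0 / ε h) * ‖eov‖
          = (ε h * c) * (qd (x 0 / ε h) * ‖eov‖) := by ring
        _ ≤ (ε h * c) * 1 := mul_le_mul_of_nonneg_left hqe (by positivity)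
        _ = ε h * c := mul_one _
    have hb2 : ε h * c < η := by
      have := mul_lt_mul_of_pos_right hh hc
      rwa [div_mul_cancel₀ _ hc.ne'] at this
    linarith
  · -- a.e. derivative
    have hnull : ∀ᵐ x ∂(volume : Measure (Fin 2 → ℝ)),
        ¬ ∃ n : ℤ, x 0 = ε h * n / 2 := measure_eq_zero_iff_ae_notMem.1 (bad_null (ε h))
    refine ae_restrict_of_ae (hnull.mono fun x hx => ?_)
    exact deriv_pointwise (ε h) c (hε h) B A₁ A₂ h1 h2 x hx

/-- The lamination constants. -/
def cval : Fin 2 → ℝ := ![3/2, 5/2]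

lemma cval_pos (j : Fin 2) : 0 < cval j := by fin_cases j <;> norm_num [cval]

lemma lam_h1 (j : Fin 2) (v : Fin 2 → ℝ) :
    (lamA₁ j).mulVec v = (lamB j).mulVec v - (cval j * v 0) • eov := by
  funext i
  fin_cases j <;> fin_cases i <;>
    simp [lamA₁, lamA₂, lamB, cval, eov, Matrix.smul_mulVec, Matrix.add_mulVec,
      Matrix.mulVec_diagonal] <;> ring

lemma lam_h2 (j : Fin 2) (v : Fin 2 → ℝ) :
    (lamA₂ j).mulVec v = (lamB j).mulVec v + (cval j * v 0) • eov := by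
  funext i
  fin_cases j <;> fin_cases i <;>
    simp [lamA₁, lamA₂, lamB, cval, eov, Matrix.smul_mulVec, Matrix.add_mulVec,
      Matrix.mulVec_diagonal] <;> ring

lemma lamA₁_mem (j : Fin 2) : lamA₁ j ∈ setA₁ := by
  fin_cases j <;> simp [lamA₁, setA₁]

lemma lamA₂_mem (j : Fin 2) : lamA₂ j ∈ setA₂ := by
  fin_cases j <;> simp [lamA₂, setA₂]

/-- The laminate gradient field has vanishing `distMix`. -/
lemma distMix_lam (j : Fin 2) (z : Fin 2 → ℝ) :
    distMix setA₁ setA₂ (fracPart z)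
      (cellP₁.indicator (fun _ => lamA₁ j) (fracPart z) +
        cellP₂.indicator (fun _ => lamA₂ j) (fracPart z)) = 0 := by
  set y := fracPart z with hy
  have h0 : 0 ≤ y 0 ∧ y 0 < 1 := ⟨Int.fract_nonneg _, Int.fract_lt_one _⟩
  have h1 : y 1 ∈ Set.Ico (0:ℝ) 1 := ⟨Int.fract_nonneg _, Int.fract_lt_one _⟩
  rcases lt_or_ge (y 0) (1/2) with h | h
  · have hm : y ∈ cellP₁ := ⟨⟨h0.1, h⟩, h1⟩
    have hn : y ∉ cellP₂ := fun hm' => absurd hm'.1.1 (not_le.2 h)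
    rw [distMix, Set.indicator_of_mem hm, Set.indicator_of_notMem hn,
      Set.indicator_of_mem hm, Set.indicator_of_notMem hn, add_zero, add_zero]
    exact infDist_zero_of_mem (lamA₁_mem j)
  · have hm : y ∈ cellP₂ := ⟨⟨h, h0.2⟩, h1⟩
    have hn : y ∉ cellP₁ := fun hm' => absurd hm'.1.2 (not_lt.2 h)
    rw [distMix, Set.indicator_of_mem hm, Set.indicator_of_notMem hn,
      Set.indicator_of_mem hm, Set.indicator_of_notMem hn, zero_add, zero_add]
    exact infDist_zero_of_mem (lamA₂_mem j)

lemma tim_zero {α : Type*} [MeasurableSpace α] {μ : Measure α} {f : ℕ → α → ℝ}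
    (hf : ∀ h x, f h x = 0) : TendstoInMeasure μ f atTop 0 := by
  intro δ hδ
  have hempty : ∀ i : ℕ, {x | δ ≤ edist (f i x) ((0 : α → ℝ) x)} = ∅ := by
    intro i; ext x
    simp [hf i x, hδ.not_ge]
  simp only [hempty, measure_empty]
  exact tendsto_const_nhds

lemma lamB_zero : lamB 0 = Matrix.diagonal ![(1 : ℝ), 1] := by
  ext i k
  fin_cases i <;> fin_cases k <;>
    simp [lamB, lamA₁, lamA₂, Matrix.diagonal] <;> norm_num

lemma lamB_one : lamB 1 = Matrix.diagonal ![(1 : ℝ)/2, 2] := by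
  ext i k
  fin_cases i <;> fin_cases k <;>
    simp [lamB, lamA₁, lamA₂, Matrix.diagonal] <;> norm_num


/-- **Lamination inclusion.**
With `𝔄₁ = {O, A₁¹, A₁²}`, `𝔄₂ = {O, A₂¹, A₂²}` and `𝔅 = {O, B¹, B²}` where
`B^j = (A₁^j + A₂^j)/2`, one has `𝔅 ⊆ 𝔄_hom`.  In particular, for each `j` and every
sequence `ε_h → 0⁺` there exist Lipschitz maps `u_h : Ω → ℝ²` with uniformly bounded
Lipschitz constants converging uniformly to `x ↦ B^j x` whose a.e. derivative is exactly
`χ_{P₁}(⟨x/ε_h⟩) A₁^j + χ_{P₂}(⟨x/ε_h⟩) A₂^j`. -/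
theorem lamination_inclusion (Ω : Set (Fin 2 → ℝ)) (hΩo : IsOpen Ω)
    (hΩb : Bornology.IsBounded Ω) (hΩne : Ω.Nonempty) :
    setB ⊆ homSet Ω setA₁ setA₂ ∧
    (∀ j : Fin 2, ∀ ε : ℕ → ℝ, (∀ h, 0 < ε h) → Tendsto ε atTop (𝓝 0) →
      ∃ (u : ℕ → (Fin 2 → ℝ) → Fin 2 → ℝ) (L : NNReal),
        (∀ h, LipschitzOnWith L (u h) Ω) ∧
        TendstoUniformlyOn u (fun x => (lamB j).mulVec x) atTop Ω ∧
        (∀ h, ∀ᵐ x ∂volume.restrict Ω,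
          HasFDerivAt (u h)
            ((cellP₁.indicator (fun _ => lamA₁ j) (fracPart ((ε h)⁻¹ • x)) +
              cellP₂.indicator (fun _ => lamA₂ j)
                (fracPart ((ε h)⁻¹ • x))).mulVecLin.toContinuousLinearMap) x)) := by
  have main : ∀ j : Fin 2, ∀ ε : ℕ → ℝ, (∀ h, 0 < ε h) → Tendsto ε atTop (𝓝 0) →
      ∃ (u : ℕ → (Fin 2 → ℝ) → Fin 2 → ℝ) (L : NNReal),
        (∀ h, LipschitzOnWith L (u h) Ω) ∧
        TendstoUniformlyOn u (fun x => (lamB j).mulVec x) atTop Ω ∧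
        (∀ h, ∀ᵐ x ∂volume.restrict Ω,
          HasFDerivAt (u h)
            ((cellP₁.indicator (fun _ => lamA₁ j) (fracPart ((ε h)⁻¹ • x)) +
              cellP₂.indicator (fun _ => lamA₂ j)
                (fracPart ((ε h)⁻¹ • x))).mulVecLin.toContinuousLinearMap) x) :=
    fun j ε hε hε0 =>
      master (lamB j) (lamA₁ j) (lamA₂ j) (cval j) (cval_pos j) (lam_h1 j) (lam_h2 j) Ω ε hε hε0
  refine ⟨?_, main⟩
  intro A hA
  simp only [setB, Set.mem_insert_iff, Set.mem_singleton_iff] at hA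
  rcases hA with rfl | rfl | rfl
  · -- `A = 0`
    intro ε hε hε0
    refine ⟨fun _ _ => 0, fun _ _ => 0, 0,
      fun h => (LipschitzWith.const _).lipschitzOnWith, ?_, ?_, ?_⟩
    · have hz : (fun x : Fin 2 → ℝ => (0 : Matrix (Fin 2) (Fin 2) ℝ).mulVec x)
          = fun _ => (0 : Fin 2 → ℝ) := by
        funext x; simp
      rw [hz]
      exact tendsto_const_nhds.tendstoUniformlyOn_const Ω
    · intro h
      refine ae_of_all _ fun x => ?_
      have hz : ((0 : Matrix (Fin 2) (Fin 2) ℝ)).mulVecLin.toContinuousLinearMap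
          = (0 : (Fin 2 → ℝ) →L[ℝ] (Fin 2 → ℝ)) := by
        ext v; simp
      rw [hz]
      exact hasFDerivAt_const _ _
    · apply tim_zero
      intro h x
      simp [distMix,
        infDist_zero_of_mem (show (0 : Matrix (Fin 2) (Fin 2) ℝ) ∈ setA₁ by simp [setA₁]),
        infDist_zero_of_mem (show (0 : Matrix (Fin 2) (Fin 2) ℝ) ∈ setA₂ by simp [setA₂])]
  · -- `A = diag(1,1) = lamB 0`
    intro ε hε hε0
    obtain ⟨u, L, hlip, hunif, hder⟩ := main 0 ε hε hε0
    refine ⟨u, fun h x => cellP₁.indicator (fun _ => lamA₁ 0) (fracPart ((ε h)⁻¹ • x)) +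
      cellP₂.indicator (fun _ => lamA₂ 0) (fracPart ((ε h)⁻¹ • x)), L, hlip, ?_, hder, ?_⟩
    · rw [← lamB_zero]; exact hunif
    · exact tim_zero fun h x => distMix_lam 0 _
  · -- `A = diag(1/2,2) = lamB 1`
    intro ε hε hε0
    obtain ⟨u, L, hlip, hunif, hder⟩ := main 1 ε hε hε0
    refine ⟨u, fun h x => cellP₁.indicator (fun _ => lamA₁ 1) (fracPart ((ε h)⁻¹ • x)) +
      cellP₂.indicator (fun _ => lamA₂ 1) (fracPart ((ε h)⁻¹ • x)), L, hlip, ?_, hder, ?_⟩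
    · rw [← lamB_one]; exact hunif
    · exact tim_zero fun h x => distMix_lam 1 _
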